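/- For every optimiser a, the map f ↦ T^y(a,f) is a bijection from the set Y^X of all functions X → Y onto the set Y^n of all length-n sequences over Y. -/

import Mathlib

/-! Since the optimiser is deterministic, equal result vectors force the two runs to probe the
same points step by step, so their full traces coincide; the full trace probes every point
exactly once and records `f` there, so it determines `f`. Injectivity of `f ↦ T^y(a,f)` between
the finite sets `Y^X` and `Y^n`, which have the same size `|Y|^n`, gives bijectivity. -/

namespace NFL

/-- A (deterministic) optimiser on search space `Fin n` and range `Y`:
it assigns to every trace (list of pairs with pairwise distinct first
components) of length `< n` a next, unvisited search point. -/
structure Optimiser (n : ℕ) (Y : Type*) where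
  next : List (Fin n × Y) → Fin n
  valid : ∀ T : List (Fin n × Y), T.length < n → (T.map Prod.fst).Nodup →
    next T ∉ T.map Prod.fst

variable {n : ℕ} {Y : Type*}

/-- The trace generated after `k` steps by running optimiser `a`
on target function `f`, starting from the empty trace. -/
def runFrom (a : Optimiser n Y) (f : Fin n → Y) : ℕ → List (Fin n × Y)
  | 0 => []
  | k + 1 =>
      runFrom a f k ++ [(a.next (runFrom a f k), f (a.next (runFrom a f k)))]

/-- The result vector `T^y(a,f)`: its `i`-th entry (0-indexed) is the value
observed at step `i+1`, i.e. `f` applied to the point probed after `i` steps. -/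
def resVec (a : Optimiser n Y) (f : Fin n → Y) (i : Fin n) : Y :=
  f (a.next (runFrom a f (i : ℕ)))

/-- A problem distribution: a probability distribution on `Y^X`. -/
def IsProbDist [Fintype Y] (P : (Fin n → Y) → ℝ) : Prop :=
  (∀ f, 0 ≤ P f) ∧ ∑ f, P f = 1

/-- `P_a(R)`: the probability that optimiser `a` produces result vector `R`. -/
def resProb [Fintype Y] [DecidableEq Y] (P : (Fin n → Y) → ℝ)
    (a : Optimiser n Y) (R : Fin n → Y) : ℝ :=
  ∑ f ∈ Finset.univ.filter (fun f => resVec a f = R), P f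

/-- Expected performance `M^P(a)` of optimiser `a` under distribution `P`
and performance measure `M`. -/
def perf [Fintype Y] (P : (Fin n → Y) → ℝ) (M : (Fin n → Y) → ℝ)
    (a : Optimiser n Y) : ℝ :=
  ∑ f, P f * M (resVec a f)

/-- NFL holds for `P`: all optimisers have the same expected performance
under every (nonnegative) performance measure. -/
def NFLholds [Fintype Y] (P : (Fin n → Y) → ℝ) : Prop :=
  ∀ M : (Fin n → Y) → ℝ, (∀ R, 0 ≤ M R) →
    ∀ a b : Optimiser n Y, perf P M a = perf P M b

/-- The histogram of `f`: `h_f(y) = |f⁻¹(y)|`. -/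
def histogram [DecidableEq Y] (f : Fin n → Y) (y : Y) : ℕ :=
  (Finset.univ.filter fun x => f x = y).card

/-- `P` is block uniform: functions with equal histograms get equal probability. -/
def BlockUniform [DecidableEq Y] (P : (Fin n → Y) → ℝ) : Prop :=
  ∀ f g : Fin n → Y, histogram f = histogram g → P f = P g

/-- `F` is closed under permutation: `f ∈ F` implies `σf ∈ F`,
where `(σf)(x) = f(σ⁻¹(x))`. -/
def Cup [Fintype Y] [DecidableEq Y] (F : Finset (Fin n → Y)) : Prop :=
  ∀ f ∈ F, ∀ σ : Equiv.Perm (Fin n), (f ∘ σ.symm) ∈ F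

/-- The uniform distribution on a class `F`. -/
noncomputable def uniformOn [Fintype Y] [DecidableEq Y] (F : Finset (Fin n → Y))
    (f : Fin n → Y) : ℝ :=
  if f ∈ F then 1 / F.card else 0

/-- An optimiser is non-adaptive if it probes the points of `X` in a fixed
order, regardless of the observed values. -/
def NonAdaptive (a : Optimiser n Y) : Prop :=
  ∃ ord : Fin n → Fin n,
    ∀ (f : Fin n → Y) (i : Fin n), a.next (runFrom a f (i : ℕ)) = ord i

/-- Optimisation time `M_ptm(R)`: the least index `i` (counting from 1) with
`R[i] = yMax`, with the convention `M_ptm(R) = n` if no such index exists. -/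
def mptm [DecidableEq Y] (yMax : Y) (R : Fin n → Y) : ℕ :=
  if h : ∃ i, R i = yMax then
    ((Finset.univ.filter fun i => R i = yMax).min'
      ⟨h.choose, Finset.mem_filter.mpr ⟨Finset.mem_univ _, h.choose_spec⟩⟩).val + 1
  else n

section Trace

variable (a : Optimiser n Y) (f : Fin n → Y)

@[simp]
lemma length_runFrom (k : ℕ) : (runFrom a f k).length = k := by
  induction k with
  | zero => rfl
  | succ k ih => simp [runFrom, ih]

lemma snd_eq_of_mem_runFrom {k : ℕ} {p : Fin n × Y} (hp : p ∈ runFrom a f k) :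
    p.2 = f p.1 := by
  induction k with
  | zero => simp [runFrom] at hp
  | succ k ih =>
      rcases List.mem_append.mp hp with hp | hp
      · exact ih hp
      · rw [List.mem_singleton.mp hp]

lemma nodup_map_fst_runFrom {k : ℕ} (hk : k ≤ n) : ((runFrom a f k).map Prod.fst).Nodup := by
  induction k with
  | zero => simp [runFrom]
  | succ k ih =>
      have hnodup := ih (Nat.le_of_succ_le hk)
      have hfresh := a.valid _ (by simpa using hk) hnodup
      simp only [runFrom, List.map_append, List.map_cons, List.map_nil]
      exact hnodup.append (List.nodup_singleton _) (List.disjoint_singleton.mpr hfresh)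

lemma mem_map_fst_runFrom_self (x : Fin n) : x ∈ (runFrom a f n).map Prod.fst := by
  classical
  have hcard : ((runFrom a f n).map Prod.fst).toFinset.card = Fintype.card (Fin n) := by
    rw [List.toFinset_card_of_nodup (nodup_map_fst_runFrom a f le_rfl)]
    simp
  exact List.mem_toFinset.mp (Finset.eq_univ_of_card _ hcard ▸ Finset.mem_univ x)

end Trace

lemma runFrom_eq_of_resVec_eq {a : Optimiser n Y} {f g : Fin n → Y}
    (h : resVec a f = resVec a g) {k : ℕ} (hk : k ≤ n) : runFrom a f k = runFrom a g k := by
  induction k with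
  | zero => rfl
  | succ k ih =>
      have htrace := ih (Nat.le_of_succ_le hk)
      have hvalue : f (a.next (runFrom a f k)) = g (a.next (runFrom a g k)) :=
        congrFun h ⟨k, hk⟩
      simp only [runFrom, htrace] at hvalue ⊢
      rw [hvalue]

lemma eq_of_runFrom_eq {a : Optimiser n Y} {f g : Fin n → Y}
    (h : runFrom a f n = runFrom a g n) : f = g := by
  funext x
  obtain ⟨p, hp, rfl⟩ := List.mem_map.mp (mem_map_fst_runFrom_self a f x)
  rw [← snd_eq_of_mem_runFrom a f hp, snd_eq_of_mem_runFrom a g (h ▸ hp)]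

theorem resVec_injective (a : Optimiser n Y) : Function.Injective (resVec a) :=
  fun _ _ h => eq_of_runFrom_eq (runFrom_eq_of_resVec_eq h le_rfl)

theorem resVec_bijective_general {n : ℕ} {Y : Type*} [Fintype Y]
    (a : Optimiser n Y) :
    Function.Bijective (resVec a) :=
  Finite.injective_iff_bijective.mp (resVec_injective a)

theorem resVec_bijective {n : ℕ} {Y : Type*} [Fintype Y] [DecidableEq Y]
    (hn : 1 ≤ n) (hY : 2 ≤ Fintype.card Y) (a : Optimiser n Y) :
    Function.Bijective (resVec a) :=
  resVec_bijective_general a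

end NFL
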